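/- Let A ≥ 1 and K < A be natural numbers. For every adaptive K-query strategy on A arms, if i* is drawn uniformly at random from Fin A, the probability that the strategy's output when run on f_{i*} differs from i* is at least 1 - (K + 1)/A. -/

import Mathlib

/-!
As long as no query hits `i*`, the run on `f_{i*}` produces the same transcript as the run on the
all-`false` reward function. So the strategy can only succeed on the `K` arms queried along that
one run or on the guess made at its end: at most `K + 1` arms, of probability `≤ (K + 1) / A`.
-/

open MeasureTheory

/-- The transcript of an adaptive query strategy `q` run against reward
function `f` for a given number of steps:
`t₀ = []`, `t_{j+1} = t_j ++ [f (q t_j)]`. -/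
def transcript (A : ℕ) (q : List Bool → Fin A) (f : Fin A → Bool) : ℕ → List Bool
  | 0 => []
  | j + 1 => transcript A q f j ++ [f (q (transcript A q f j))]

/-- The adaptive `K`-query strategy `(q, G)` succeeds on the arm `i` if its
output when run on the reward function `f_i = fun j => decide (j = i)`
equals `i`. -/
def banditSucceeds (A K : ℕ) (q G : List Bool → Fin A) (i : Fin A) : Prop :=
  G (transcript A q (fun j => decide (j = i)) K) = i

theorem transcript_congr (A : ℕ) (q : List Bool → Fin A) (f g : Fin A → Bool) (n : ℕ)
    (h : ∀ j < n, f (q (transcript A q g j)) = g (q (transcript A q g j))) :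
    transcript A q f n = transcript A q g n := by
  induction n with
  | zero => rfl
  | succ n ih =>
    have hprefix : transcript A q f n = transcript A q g n :=
      ih fun j hj => h j (Nat.lt_succ_of_lt hj)
    simp only [transcript, hprefix, h n (Nat.lt_succ_self n)]

def candidateArms (A K : ℕ) (q G : List Bool → Fin A) : Finset (Fin A) :=
  insert (G (transcript A q (fun _ => false) K))
    ((Finset.range K).image fun j => q (transcript A q (fun _ => false) j))

theorem card_candidateArms_le (A K : ℕ) (q G : List Bool → Fin A) :
    (candidateArms A K q G).card ≤ K + 1 :=
  calc (candidateArms A K q G).card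
      ≤ ((Finset.range K).image fun j => q (transcript A q (fun _ => false) j)).card + 1 :=
        Finset.card_insert_le _ _
    _ ≤ K + 1 := by
        simpa using Finset.card_image_le (s := Finset.range K)

theorem mem_candidateArms_of_banditSucceeds (A K : ℕ) (q G : List Bool → Fin A) (i : Fin A)
    (hi : banditSucceeds A K q G i) : i ∈ candidateArms A K q G := by
  by_contra hmem
  have hunqueried : ∀ j < K, q (transcript A q (fun _ => false) j) ≠ i := fun j hj hji =>
    hmem (Finset.mem_insert_of_mem (Finset.mem_image.mpr ⟨j, Finset.mem_range.mpr hj, hji⟩))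
  have hsame : transcript A q (fun j => decide (j = i)) K = transcript A q (fun _ => false) K :=
    transcript_congr A q _ _ K fun j hj => decide_eq_false (hunqueried j hj)
  rw [banditSucceeds, hsame] at hi
  exact hmem (hi ▸ Finset.mem_insert_self _ _)

theorem uniformOfFintype_toMeasure_le_card_div {α : Type*} [Fintype α] [Nonempty α]
    [MeasurableSpace α] [MeasurableSingletonClass α] {s : Set α} (t : Finset α) (hst : s ⊆ t) :
    (PMF.uniformOfFintype α).toMeasure s ≤ t.card / Fintype.card α :=
  calc (PMF.uniformOfFintype α).toMeasure s
      ≤ (PMF.uniformOfFintype α).toMeasure t := measure_mono hst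
    _ = t.card / Fintype.card α := by
        rw [PMF.toMeasure_uniformOfFintype_apply _ t.measurableSet]
        simp

theorem stmt_1_general (A K : ℕ) (hA : 1 ≤ A) (q G : List Bool → Fin A) :
    haveI : Nonempty (Fin A) := ⟨⟨0, hA⟩⟩
    (1 : ENNReal) - ((K : ENNReal) + 1) / (A : ENNReal) ≤
      (PMF.uniformOfFintype (Fin A)).toMeasure
        {i : Fin A | ¬ banditSucceeds A K q G i} := by
  have : Nonempty (Fin A) := ⟨⟨0, hA⟩⟩
  have hsuccess : (PMF.uniformOfFintype (Fin A)).toMeasure {i | banditSucceeds A K q G i}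
      ≤ ((K : ENNReal) + 1) / A := by
    calc (PMF.uniformOfFintype (Fin A)).toMeasure {i | banditSucceeds A K q G i}
        ≤ (candidateArms A K q G).card / Fintype.card (Fin A) :=
          uniformOfFintype_toMeasure_le_card_div _ fun i =>
            mem_candidateArms_of_banditSucceeds A K q G i
      _ ≤ ((K : ENNReal) + 1) / A := by
          rw [Fintype.card_fin]
          gcongr
          exact_mod_cast card_candidateArms_le A K q G
  rw [← Set.compl_ofPred, prob_compl_eq_one_sub MeasurableSet.of_discrete]
  exact tsub_le_tsub_left hsuccess 1

/-- for `1 ≤ A` and `K < A`, under the uniform distribution on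
`Fin A`, the probability that an adaptive `K`-query strategy fails on the
drawn arm is at least `1 - (K + 1) / A`. -/
theorem stmt_1 (A K : ℕ) (hA : 1 ≤ A) (hK : K < A) (q G : List Bool → Fin A) :
    haveI : Nonempty (Fin A) := ⟨⟨0, hA⟩⟩
    (1 : ENNReal) - ((K : ENNReal) + 1) / (A : ENNReal) ≤
      (PMF.uniformOfFintype (Fin A)).toMeasure
        {i : Fin A | ¬ banditSucceeds A K q G i} :=
  stmt_1_general A K hA q G
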